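/- Let H(ζ) = √2 ζ^{−(2k−1)} ((ζ+2+ζ^{−1})/4)^k P_k(−(ζ−2+ζ^{−1})/4) be the z-transform of the Deslauriers–Dubuc filter of order 2k, where P_k(x) = Σ_{j=0}^{k−1} binom(k−1+j, j) x^j, and define H₁(z) = z^{−k+1}/√2 and H₀(z²) = H(z) − z^{−(2k−1)}/√2. Then for all z ∈ 𝕋: 0 ≤ z^{2k−1} H(z) ≤ √2, |H₀(z)| ≤ 1/√2, and 2 − |H₀(z)|² − |H₁(z)|² ≥ 1 > 0. -/

import Mathlib

open Complex

/-- The z-transform of the Deslauriers–Dubuc filter of order `2k`: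
`H(ζ) = √2 ζ^{−(2k−1)} ((ζ+2+ζ⁻¹)/4)^k P_k(−(ζ−2+ζ⁻¹)/4)`, where
`P_k(x) = Σ_{j=0}^{k−1} C(k−1+j, j) x^j`. -/
noncomputable def ddH (k : ℕ) (z : ℂ) : ℂ :=
  (Real.sqrt 2 : ℂ) * z ^ (-(2 * (k : ℤ) - 1)) * ((z + 2 + z⁻¹) / 4) ^ k *
    ∑ j ∈ Finset.range k, (Nat.choose (k - 1 + j) j : ℂ) * (-(z - 2 + z⁻¹) / 4) ^ j

/-!
On the unit circle `z = e^{iω}` we have `(z + 2 + z⁻¹)/4 = cos²(ω/2) =: c` and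
`-(z - 2 + z⁻¹)/4 = 1 - c`, so `z^{2k-1} H(z) = √2 c^k P_k(1 - c)` is a real amplitude `a`.
The Bezout identity `c^k P_k(1 - c) + (1 - c)^k P_k(c) = 1`, proved by induction on `k` from a
Pascal-type recursion for `P_k`, together with `P_k ≥ 0` on `[0, 1]`, puts `a` in `[0, √2]`.
Then `|H₀| = |a - 1/√2| ≤ 1/√2` and `|H₁|² = 1/2`.
-/

open Finset

section DaubechiesPoly

variable {R : Type*}

noncomputable def daubechiesPoly [Semiring R] (k : ℕ) (x : R) : R :=
  ∑ j ∈ range k, ((k - 1 + j).choose j : R) * x ^ j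

theorem daubechiesPoly_one [Semiring R] (x : R) : daubechiesPoly 1 x = 1 := by
  simp [daubechiesPoly]

theorem daubechiesPoly_nonneg [Semiring R] [PartialOrder R] [IsOrderedRing R] (k : ℕ) {x : R}
    (hx : 0 ≤ x) : 0 ≤ daubechiesPoly k x :=
  sum_nonneg fun j _ => mul_nonneg (Nat.cast_nonneg _) (pow_nonneg hx j)

theorem one_sub_mul_daubechiesPoly_succ_succ [CommRing R] (m : ℕ) (x : R) :
    (1 - x) * daubechiesPoly (m + 2) x =
      daubechiesPoly (m + 1) x + ((2 * m + 1).choose (m + 1) : R) * x ^ (m + 1) -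
        ((2 * m + 2).choose (m + 1) : R) * x ^ (m + 2) := by
  set A := ∑ i ∈ range (m + 1), ((m + 1 + i).choose i : R) * x ^ (i + 1)
  set B := ∑ i ∈ range (m + 1), ((m + 1 + i).choose (i + 1) : R) * x ^ (i + 1)
  have hPascal : daubechiesPoly (m + 2) x = 1 + (A + B) := by
    rw [daubechiesPoly, sum_range_succ', ← sum_add_distrib, add_comm]
    congr 1
    · simp
    · refine sum_congr rfl fun i _ => ?_
      rw [show m + 2 - 1 + (i + 1) = m + 1 + i + 1 by omega, Nat.choose_succ_succ]
      push_cast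
      ring
  have hA : x * daubechiesPoly (m + 2) x = A + ((2 * m + 2).choose (m + 1) : R) * x ^ (m + 2) := by
    rw [daubechiesPoly, sum_range_succ, mul_add, mul_sum, show m + 2 - 1 = m + 1 by omega,
      show m + 1 + (m + 1) = 2 * m + 2 by omega]
    congr 1
    · exact sum_congr rfl fun i _ => by ring
    · ring
  have hB : B = daubechiesPoly (m + 1) x - 1 + ((2 * m + 1).choose (m + 1) : R) * x ^ (m + 1) := by
    rw [daubechiesPoly, sum_range_succ', show B = _ from sum_range_succ _ m,
      show m + 1 + m = 2 * m + 1 by omega]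
    simp only [show m + 1 - 1 = m by omega, add_zero, Nat.choose_zero_right, Nat.cast_one, pow_zero,
      mul_one, add_sub_cancel_right, ← add_assoc, add_right_comm m _ 1]
  linear_combination hPascal - hA + hB

theorem daubechiesPoly_bezout [CommRing R] {k : ℕ} (hk : k ≠ 0) (x : R) :
    x ^ k * daubechiesPoly k (1 - x) + (1 - x) ^ k * daubechiesPoly k x = 1 := by
  obtain ⟨m, rfl⟩ := Nat.exists_eq_add_one_of_ne_zero hk
  clear hk
  induction m with
  | zero => simp [daubechiesPoly_one]
  | succ m ih =>
    have hcentral : ((2 * m + 2).choose (m + 1) : R) = 2 * ((2 * m + 1).choose (m + 1) : R) := by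
      rw [Nat.choose_succ_succ, ← Nat.choose_symm_half]
      push_cast
      ring
    have hx := one_sub_mul_daubechiesPoly_succ_succ m x
    have h1x := one_sub_mul_daubechiesPoly_succ_succ m (1 - x)
    rw [sub_sub_cancel] at h1x
    linear_combination ih + x ^ (m + 1) * h1x + (1 - x) ^ (m + 1) * hx -
      x ^ (m + 1) * (1 - x) ^ (m + 1) * hcentral

theorem pow_mul_daubechiesPoly_one_sub_mem_Icc [CommRing R] [PartialOrder R] [IsOrderedRing R]
    {k : ℕ} (hk : k ≠ 0) {x : R} (hx : x ∈ Set.Icc 0 1) :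
    x ^ k * daubechiesPoly k (1 - x) ∈ Set.Icc 0 1 := by
  have h1x : 0 ≤ 1 - x := sub_nonneg.2 hx.2
  have hrest : 0 ≤ (1 - x) ^ k * daubechiesPoly k x :=
    mul_nonneg (pow_nonneg h1x k) (daubechiesPoly_nonneg k hx.1)
  refine ⟨mul_nonneg (pow_nonneg hx.1 k) (daubechiesPoly_nonneg k h1x), ?_⟩
  linear_combination hrest + daubechiesPoly_bezout hk x

end DaubechiesPoly

theorem Complex.add_inv_of_norm_eq_one {z : ℂ} (hz : ‖z‖ = 1) : z + z⁻¹ = (2 * z.re : ℝ) := by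
  rw [inv_eq_conj hz, add_conj]

theorem Complex.one_add_re_div_two_mem_Icc {z : ℂ} (hz : ‖z‖ ≤ 1) :
    (1 + z.re) / 2 ∈ Set.Icc (0 : ℝ) 1 := by
  obtain ⟨h₁, h₂⟩ := abs_le.1 ((abs_re_le_norm z).trans hz)
  constructor <;> linarith

noncomputable def ddAmplitude (k : ℕ) (c : ℝ) : ℝ :=
  Real.sqrt 2 * (c ^ k * daubechiesPoly k (1 - c))

theorem ddAmplitude_mem_Icc {k : ℕ} (hk : k ≠ 0) {c : ℝ} (hc : c ∈ Set.Icc 0 1) :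
    ddAmplitude k c ∈ Set.Icc 0 (Real.sqrt 2) := by
  obtain ⟨h₀, h₁⟩ := pow_mul_daubechiesPoly_one_sub_mem_Icc hk hc
  exact ⟨mul_nonneg (Real.sqrt_nonneg 2) h₀, mul_le_of_le_one_right (Real.sqrt_nonneg 2) h₁⟩

theorem ddH_of_norm_eq_one (k : ℕ) {z : ℂ} (hz : ‖z‖ = 1) :
    ddH k z = z ^ (-(2 * (k : ℤ) - 1)) * ddAmplitude k ((1 + z.re) / 2) := by
  have hc : (z + 2 + z⁻¹) / 4 = ((1 + z.re) / 2 : ℝ) := by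
    rw [add_right_comm, Complex.add_inv_of_norm_eq_one hz]
    push_cast
    ring
  have hs : -(z - 2 + z⁻¹) / 4 = (1 - (1 + z.re) / 2 : ℝ) := by
    rw [sub_add_eq_add_sub, Complex.add_inv_of_norm_eq_one hz]
    push_cast
    ring
  rw [ddH, hc, hs, ddAmplitude, daubechiesPoly]
  push_cast
  ring

theorem zpow_mul_ddH_of_norm_eq_one {k : ℕ} (hk : 1 ≤ k) {z : ℂ} (hz : ‖z‖ = 1) :
    z ^ (2 * k - 1) * ddH k z = ddAmplitude k ((1 + z.re) / 2) := by
  have hz0 : z ≠ 0 := norm_ne_zero_iff.1 (hz ▸ one_ne_zero)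
  rw [ddH_of_norm_eq_one k hz, ← mul_assoc, ← zpow_natCast, ← zpow_add₀ hz0,
    show ((2 * k - 1 : ℕ) : ℤ) + -(2 * (k : ℤ) - 1) = 0 by omega, zpow_zero, one_mul]

theorem norm_ddH_sub_of_norm_eq_one (k : ℕ) {z : ℂ} (hz : ‖z‖ = 1) :
    ‖ddH k z - z ^ (-(2 * (k : ℤ) - 1)) / (Real.sqrt 2 : ℂ)‖ =
      |ddAmplitude k ((1 + z.re) / 2) - 1 / Real.sqrt 2| := by
  rw [ddH_of_norm_eq_one k hz, div_eq_mul_one_div _ (Real.sqrt 2 : ℂ), ← mul_sub, norm_mul,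
    norm_zpow, hz, one_zpow, one_mul, ← Complex.ofReal_one, ← Complex.ofReal_div,
    ← Complex.ofReal_sub, Complex.norm_real, Real.norm_eq_abs]

theorem dd_bounds (k : ℕ) (hk : 1 ≤ k) (z : ℂ) (hz : ‖z‖ = 1) :
    (z ^ (2 * k - 1) * ddH k z).im = 0 ∧
    0 ≤ (z ^ (2 * k - 1) * ddH k z).re ∧
    (z ^ (2 * k - 1) * ddH k z).re ≤ Real.sqrt 2 ∧
    ‖ddH k z - z ^ (-(2 * (k : ℤ) - 1)) / (Real.sqrt 2 : ℂ)‖ ≤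
      1 / Real.sqrt 2 ∧
    1 ≤ 2 - Complex.normSq (ddH k z - z ^ (-(2 * (k : ℤ) - 1)) / (Real.sqrt 2 : ℂ)) -
        Complex.normSq ((z ^ 2) ^ (-(k : ℤ) + 1) / (Real.sqrt 2 : ℂ)) ∧
    0 < 2 - Complex.normSq (ddH k z - z ^ (-(2 * (k : ℤ) - 1)) / (Real.sqrt 2 : ℂ)) -
        Complex.normSq ((z ^ 2) ^ (-(k : ℤ) + 1) / (Real.sqrt 2 : ℂ)) := by
  set a := ddAmplitude k ((1 + z.re) / 2)
  obtain ⟨ha₀, ha₁⟩ : a ∈ Set.Icc 0 (Real.sqrt 2) :=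
    ddAmplitude_mem_Icc (by omega) (Complex.one_add_re_div_two_mem_Icc hz.le)
  have hH₀ : |a - 1 / Real.sqrt 2| ≤ 1 / Real.sqrt 2 := by
    have : Real.sqrt 2 = 2 * (1 / Real.sqrt 2) := by field_simp; simp
    rw [abs_le]
    constructor <;> linarith
  have hH₀_sq : Complex.normSq (ddH k z - z ^ (-(2 * (k : ℤ) - 1)) / (Real.sqrt 2 : ℂ)) ≤ 1 / 2 := by
    rw [← Complex.sq_norm, norm_ddH_sub_of_norm_eq_one k hz]
    calc |a - 1 / Real.sqrt 2| ^ 2 ≤ (1 / Real.sqrt 2) ^ 2 := pow_le_pow_left₀ (abs_nonneg _) hH₀ 2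
      _ = 1 / 2 := by simp
  have hH₁_sq : Complex.normSq ((z ^ 2) ^ (-(k : ℤ) + 1) / (Real.sqrt 2 : ℂ)) = 1 / 2 := by
    rw [← Complex.sq_norm, norm_div, norm_zpow, norm_pow, hz]
    simp
  rw [zpow_mul_ddH_of_norm_eq_one hk hz, Complex.ofReal_im, Complex.ofReal_re,
    norm_ddH_sub_of_norm_eq_one k hz]
  exact ⟨rfl, ha₀, ha₁, hH₀, by linarith, by linarith⟩
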